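/- For real k ≠ 0, M > 0, ε > 0, and A ∈ ℝ, define Ψ : ℝ → ℂ piecewise by Ψ(x) = iA·sin(kx) for x ≤ 0, Ψ(x) = T(x)·(iA·sin(kx) + ε·cos(kx)) for x > 0, where T(x) = x for x ∈ [0,1] and T(x) = 1 for x > 1. Then the probability current j(x) = (1/M)·Im(Ψ*(x)·Ψ'(x)) satisfies j(x) = 0 for x < 0 and j(x) = εkA/M for x > 1. -/

import Mathlib

open Complex

noncomputable def rampT (x : ℝ) : ℝ := max 0 (min x 1)

lemma hasDeriv_sinpart (k A : ℝ) (x : ℝ) :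
    HasDerivAt (fun y : ℝ => Complex.I * A * Real.sin (k * y))
      (Complex.I * A * (k * Real.cos (k * x))) x := by
  have h1 : HasDerivAt (fun y : ℝ => Real.sin (k * y)) (k * Real.cos (k * x)) x := by
    have := (Real.hasDerivAt_sin (k * x)).comp x ((hasDerivAt_id x).const_mul k)
    simpa [mul_comm, Function.comp_def] using this
  have h2 := h1.ofReal_comp
  have h3 := h2.const_mul (Complex.I * A)
  simpa [mul_assoc] using h3

lemma hasDeriv_cospart (k ε : ℝ) (x : ℝ) :
    HasDerivAt (fun y : ℝ => (ε : ℂ) * Real.cos (k * y))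
      ((ε : ℂ) * (-(k * Real.sin (k * x)))) x := by
  have h1 : HasDerivAt (fun y : ℝ => Real.cos (k * y)) (-(k * Real.sin (k * x))) x := by
    have := (Real.hasDerivAt_cos (k * x)).comp x ((hasDerivAt_id x).const_mul k)
    simpa [mul_comm, Function.comp_def] using this
  have h2 := h1.ofReal_comp
  have h3 := h2.const_mul (ε : ℂ)
  simpa using h3

/-- Large probability nonconservation from small Schrödinger violation: for the
piecewise state `Ψ`, the probability current `j = (1/M)Im(Ψ* Ψ')` vanishes for
`x < 0` and equals `εkA/M` for `x > 1`. -/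
theorem current_jump_counterexample (k M ε A : ℝ) (hk : k ≠ 0) (hM : 0 < M)
    (hε : 0 < ε)
    (Ψ : ℝ → ℂ)
    (hΨ : Ψ = fun x : ℝ =>
      if x ≤ 0 then Complex.I * A * Real.sin (k * x)
      else (rampT x : ℂ) * (Complex.I * A * Real.sin (k * x) + ε * Real.cos (k * x)))
    (j : ℝ → ℝ)
    (hj : j = fun x : ℝ => (1 / M) * ((starRingEnd ℂ) (Ψ x) * deriv Ψ x).im) :
    (∀ x : ℝ, x < 0 → j x = 0) ∧ (∀ x : ℝ, 1 < x → j x = ε * k * A / M) := by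
  subst hΨ hj
  constructor
  · intro x hx
    have heq : (fun x : ℝ =>
        if x ≤ 0 then Complex.I * A * Real.sin (k * x)
        else (rampT x : ℂ) * (Complex.I * A * Real.sin (k * x) + ε * Real.cos (k * x)))
        =ᶠ[nhds x] fun y : ℝ => Complex.I * A * Real.sin (k * y) := by
      filter_upwards [Iio_mem_nhds hx] with y hy
      have hy' : y < 0 := hy
      simp [le_of_lt hy']
    beta_reduce
    rw [heq.deriv_eq, (hasDeriv_sinpart k A x).deriv]
    simp only [hx.le, if_pos]
    simp [Complex.mul_im, Complex.mul_re, Complex.add_im, Complex.add_re,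
      Complex.I_re, Complex.I_im, Complex.ofReal_re, Complex.ofReal_im,
      Complex.conj_re, Complex.conj_im, Complex.sin_ofReal_re, Complex.sin_ofReal_im, Complex.cos_ofReal_re, Complex.cos_ofReal_im, -Complex.ofReal_sin, -Complex.ofReal_cos]
  · intro x hx
    have heq : (fun x : ℝ =>
        if x ≤ 0 then Complex.I * A * Real.sin (k * x)
        else (rampT x : ℂ) * (Complex.I * A * Real.sin (k * x) + ε * Real.cos (k * x)))
        =ᶠ[nhds x] fun y : ℝ => Complex.I * A * Real.sin (k * y) + (ε : ℂ) * Real.cos (k * y) := by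
      filter_upwards [Ioi_mem_nhds hx] with y hy
      have hy' : (1:ℝ) < y := hy
      have h0 : ¬ y ≤ 0 := by linarith
      have hr : rampT y = 1 := by
        unfold rampT
        rw [min_eq_right hy'.le]
        simp
      simp [h0, hr]
    beta_reduce
    rw [heq.deriv_eq, HasDerivAt.deriv (f := fun y : ℝ => Complex.I * A * Real.sin (k * y) + (ε : ℂ) * Real.cos (k * y)) ((hasDeriv_sinpart k A x).add (hasDeriv_cospart k ε x))]
    have h0 : ¬ x ≤ 0 := by linarith
    have hr : rampT x = 1 := by
      unfold rampT
      rw [min_eq_right hx.le]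
      simp
    simp only [h0, if_neg, if_false, hr]
    simp [Complex.mul_im, Complex.mul_re, Complex.add_im, Complex.add_re,
      Complex.I_re, Complex.I_im, Complex.ofReal_re, Complex.ofReal_im,
      Complex.conj_re, Complex.conj_im, Complex.sin_ofReal_re, Complex.sin_ofReal_im, Complex.cos_ofReal_re, Complex.cos_ofReal_im, -Complex.ofReal_sin, -Complex.ofReal_cos]
    have hsc := Real.sin_sq_add_cos_sq (k * x)
    field_simp
    linear_combination A * hsc
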